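/- arXiv:1105.0475 — 5 statements merged into one kernel-verified Lean document; each statement's English description precedes it below -/
import Mathlib

section
/- Let H be a finite solvable group whose order is divisible by two distinct primes p and q. Then H contains a subgroup K of exponent pq whose order is pq^a or p^a q for some positive integer a. Moreover, if the Sylow p-subgroups and the Sylow q-subgroups of H are both cyclic, then H contains a subgroup of order pq. -/
/-!
Induction on `|H|`. A nontrivial solvable group has a nontrivial normal subgroup `N` of prime
exponent `r`: the `r`-torsion of the last nontrivial term of its derived series. If `r = q`, adjoin
an element `x` of order `p`; then `N` has index `p` in `N ⊔ ⟨x⟩`, so this subgroup has order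
`p q^b`, and `g ^ p ∈ N` for each of its elements gives exponent `pq`. The case `r = p` is
symmetric. Otherwise `|N|` is prime to `pq`, and by Schur–Zassenhaus the subgroup that induction
provides in `H / N` lifts to an isomorphic subgroup of `H`.

If the Sylow `q`-subgroups of `H` are cyclic, a subgroup of order `q^a` of `K` is cyclic, so `q^a`
divides the exponent `pq` of `K`, forcing `a = 1`.
-/

open Subgroup

section

variable {G : Type*} [Group G]

theorem dvd_exponent_of_prime_dvd_card [Finite G] {p : ℕ} (hp : p.Prime)
    (h : p ∣ Nat.card G) : p ∣ Monoid.exponent G := by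
  have := Fact.mk hp
  obtain ⟨g, hg⟩ := exists_prime_orderOf_dvd_card' p h
  exact hg ▸ Monoid.order_dvd_exponent g

theorem exponent_eq_mul_of_pow_mul_eq_one [Finite G] {p q : ℕ} (hp : p.Prime) (hq : q.Prime)
    (hpq : p ≠ q) (hG : ∀ g : G, g ^ (p * q) = 1) (hpd : p ∣ Nat.card G)
    (hqd : q ∣ Nat.card G) : Monoid.exponent G = p * q :=
  Nat.dvd_antisymm (Monoid.exponent_dvd_of_forall_pow_eq_one hG) <|
    ((Nat.coprime_primes hp hq).2 hpq).mul_dvd_of_dvd_of_dvd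
      (dvd_exponent_of_prime_dvd_card hp hpd) (dvd_exponent_of_prime_dvd_card hq hqd)

theorem isPGroup_of_forall_mem_pow_eq_one {p : ℕ} {N : Subgroup G} (hN : ∀ g ∈ N, g ^ p = 1) :
    IsPGroup p N :=
  fun g => ⟨1, Subtype.ext <| by simpa using hN g g.2⟩

def IsBiprimaryOfExponent (p q : ℕ) (K : Type*) [Group K] : Prop :=
  Monoid.exponent K = p * q ∧ ∃ a : ℕ, 0 < a ∧ (Nat.card K = p * q ^ a ∨ Nat.card K = p ^ a * q)

namespace IsBiprimaryOfExponent

variable {p q : ℕ} {K L : Type*} [Group K] [Group L]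

theorem symm (h : IsBiprimaryOfExponent p q K) : IsBiprimaryOfExponent q p K := by
  obtain ⟨hexp, a, ha, hcard⟩ := h
  refine ⟨by rw [hexp, mul_comm], a, ha, ?_⟩
  rw [mul_comm q, mul_comm (q ^ a)]
  exact hcard.symm

theorem of_mulEquiv (e : K ≃* L) (h : IsBiprimaryOfExponent p q K) :
    IsBiprimaryOfExponent p q L := by
  obtain ⟨hexp, a, ha, hcard⟩ := h
  exact ⟨(Monoid.exponent_eq_of_mulEquiv e).symm.trans hexp, a, ha,
    by rwa [← Nat.card_congr e.toEquiv]⟩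

theorem coprime_card {r : ℕ} (h : IsBiprimaryOfExponent p q K) (hrp : r.Coprime p)
    (hrq : r.Coprime q) : r.Coprime (Nat.card K) := by
  obtain ⟨-, a, -, hcard | hcard⟩ := h <;> rw [hcard]
  · exact hrp.mul_right (hrq.pow_right a)
  · exact (hrp.pow_right a).mul_right hrq

end IsBiprimaryOfExponent

def Subgroup.torsionBy (A : Subgroup G) [IsMulCommutative A] (n : ℕ) : Subgroup G where
  carrier := {g | g ∈ A ∧ g ^ n = 1}
  one_mem' := ⟨A.one_mem, one_pow n⟩
  mul_mem' := by
    rintro a b ⟨ha, ha1⟩ ⟨hb, hb1⟩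
    refine ⟨A.mul_mem ha hb, ?_⟩
    have hab : Commute a b := mem_centralizer_iff.1 (le_centralizer A hb) a ha
    rw [hab.mul_pow, ha1, hb1, one_mul]
  inv_mem' := by
    rintro a ⟨ha, ha1⟩
    exact ⟨A.inv_mem ha, by rw [inv_pow, ha1, inv_one]⟩

namespace Subgroup.torsionBy

variable (A : Subgroup G) [IsMulCommutative A]

instance normal [A.Normal] (n : ℕ) : (A.torsionBy n).Normal where
  conj_mem g hg h :=
    ⟨‹A.Normal›.conj_mem g hg.1 h, by rw [conj_pow, hg.2, mul_one, mul_inv_cancel]⟩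

theorem ne_bot [Finite G] {r : ℕ} (hr : r.Prime) (h : r ∣ Nat.card A) : A.torsionBy r ≠ ⊥ := by
  have := Fact.mk hr
  obtain ⟨y, hy⟩ := exists_prime_orderOf_dvd_card' r h
  have hy1 : y ≠ 1 := by
    rw [Ne, ← orderOf_eq_one_iff, hy]
    exact hr.ne_one
  have hyr : (y : G) ^ r = 1 := by
    rw [← hy, ← Subgroup.coe_pow, pow_orderOf_eq_one, OneMemClass.coe_one]
  exact ne_bot_iff_exists_ne_one.2
    ⟨⟨y, y.2, hyr⟩, fun h => hy1 (Subtype.ext (congrArg Subtype.val h :))⟩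

end Subgroup.torsionBy

theorem exists_normal_isMulCommutative_ne_bot [Group.IsSolvable G] [Nontrivial G] :
    ∃ A : Subgroup G, A.Normal ∧ IsMulCommutative A ∧ A ≠ ⊥ := by
  classical
  have hsolv := Group.IsSolvable.solvable (G := G)
  have hm0 : Nat.find hsolv ≠ 0 := by
    intro h
    have := Nat.find_spec hsolv
    rw [h, derivedSeries_zero] at this
    exact top_ne_bot this
  refine ⟨derivedSeries G (Nat.find hsolv - 1), derivedSeries_normal G _, ?_,
    Nat.find_min hsolv (Nat.sub_one_lt hm0)⟩
  rw [← commutator_self_eq_bot_iff, ← derivedSeries_succ, Nat.sub_add_cancel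
    (Nat.one_le_iff_ne_zero.2 hm0)]
  exact Nat.find_spec hsolv

theorem exists_normal_ne_bot_forall_pow_prime_eq_one [Finite G] [Group.IsSolvable G]
    [Nontrivial G] :
    ∃ r, r.Prime ∧ ∃ N : Subgroup G, N.Normal ∧ N ≠ ⊥ ∧ ∀ g ∈ N, g ^ r = 1 := by
  obtain ⟨A, hAn, hAc, hA⟩ := exists_normal_isMulCommutative_ne_bot (G := G)
  have hr : (Nat.card A).minFac.Prime :=
    Nat.minFac_prime ((one_lt_card_iff_ne_bot A).2 hA).ne'
  exact ⟨_, hr, A.torsionBy _, inferInstance, torsionBy.ne_bot A hr (Nat.minFac_dvd _),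
    fun _ hg => hg.2⟩

theorem isBiprimaryOfExponent_sup_zpowers [Finite G] {p q : ℕ} (hp : p.Prime) (hq : q.Prime)
    (hpq : p ≠ q) {N : Subgroup G} [N.Normal] (hN : N ≠ ⊥) (hNq : ∀ g ∈ N, g ^ q = 1) {x : G}
    (hx : orderOf x = p) : IsBiprimaryOfExponent p q ↥(N ⊔ zpowers x) := by
  have := Fact.mk hq
  obtain ⟨b, hb, hNcard⟩ := (isPGroup_of_forall_mem_pow_eq_one hNq).nontrivial_iff_card.1
    ((nontrivial_iff_ne_bot N).2 hN)
  have hZ : Nat.card (zpowers x) = p := (Nat.card_zpowers x).trans hx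
  have hdisj : N ⊓ zpowers x = ⊥ := Disjoint.eq_bot <| disjoint_of_coprime_natCard <| by
    rw [hNcard, hZ]
    exact ((Nat.coprime_primes hq hp).2 hpq.symm).pow_left b
  have hidx : N.relIndex (N ⊔ zpowers x) = p := by
    rw [relIndex_sup_left, ← inf_relIndex_right, hdisj, relIndex_bot_left, hZ]
  have hcard : Nat.card ↥(N ⊔ zpowers x) = p * q ^ b := by
    rw [← relIndex_bot_left, ← relIndex_mul_relIndex ⊥ N _ bot_le le_sup_left, relIndex_bot_left,
      hidx, hNcard, mul_comm]
  have hpow : ∀ g : ↥(N ⊔ zpowers x), g ^ (p * q) = 1 := fun g => Subtype.ext <| by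
    simpa [pow_mul] using hNq _ (hidx ▸ N.pow_relIndex_mem g.2)
  refine ⟨exponent_eq_mul_of_pow_mul_eq_one hp hq hpq hpow ?_ ?_, b, hb, Or.inl hcard⟩ <;>
    rw [hcard]
  · exact dvd_mul_right _ _
  · exact (dvd_pow_self q hb.ne').mul_left p

theorem exists_subgroup_mulEquiv_of_coprime_card [Finite G] {N : Subgroup G} [N.Normal]
    (Kb : Subgroup (G ⧸ N)) (hcop : (Nat.card N).Coprime (Nat.card Kb)) :
    ∃ C : Subgroup G, Nonempty (C ≃* Kb) := by
  set K := Kb.comap (QuotientGroup.mk' N)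
  set φ : K →* G ⧸ N := (QuotientGroup.mk' N).domRestrict K
  have hNK : N ≤ K := fun g hg => by
    simp [K, (QuotientGroup.eq_one_iff g).2 hg]
  have hker : φ.ker = N.subgroupOf K := by
    rw [MonoidHom.ker_domRestrict, QuotientGroup.ker_mk']
  have hrange : φ.range = Kb := by
    rw [MonoidHom.domRestrict_range,
      map_comap_eq_self_of_surjective (QuotientGroup.mk'_surjective N)]
  have hcard : Nat.card (N.subgroupOf K) = Nat.card N :=
    Nat.card_congr (subgroupOfEquivOfLe hNK).toEquiv
  have hidx : (N.subgroupOf K).index = Nat.card Kb := by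
    rw [← hker, index_ker, hrange]
  obtain ⟨C, hC⟩ :=
    exists_left_complement'_of_coprime (N := N.subgroupOf K) (by rwa [hcard, hidx])
  exact ⟨C.map K.subtype, ⟨(equivMapOfInjective C K.subtype K.subtype_injective).symm.trans <|
    hC.QuotientMulEquiv.symm.trans <| (QuotientGroup.quotientMulEquivOfEq hker.symm).trans <|
      (QuotientGroup.quotientKerEquivRange φ).trans (MulEquiv.subgroupCongr hrange)⟩⟩

theorem exists_isBiprimaryOfExponent [Finite G] [Group.IsSolvable G] {p q : ℕ} (hp : p.Prime)
    (hq : q.Prime) (hpq : p ≠ q) (hpd : p ∣ Nat.card G) (hqd : q ∣ Nat.card G) :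
    ∃ K : Subgroup G, IsBiprimaryOfExponent p q K := by
  induction hn : Nat.card G using Nat.strong_induction_on generalizing G with
  | _ n ih =>
  have : Nontrivial G := Finite.one_lt_card_iff_nontrivial.1 <|
    hp.one_lt.trans_le (Nat.le_of_dvd Nat.card_pos hpd)
  obtain ⟨r, hr, N, hNn, hN, hNr⟩ := exists_normal_ne_bot_forall_pow_prime_eq_one (G := G)
  by_cases hrq : r = q
  · subst hrq
    have := Fact.mk hp
    obtain ⟨x, hx⟩ := exists_prime_orderOf_dvd_card' p hpd
    exact ⟨_, isBiprimaryOfExponent_sup_zpowers hp hr hpq hN hNr hx⟩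
  by_cases hrp : r = p
  · subst hrp
    have := Fact.mk hq
    obtain ⟨x, hx⟩ := exists_prime_orderOf_dvd_card' q hqd
    exact ⟨_, (isBiprimaryOfExponent_sup_zpowers hq hr (Ne.symm hpq) hN hNr hx).symm⟩
  have := Fact.mk hr
  obtain ⟨b, hNcard⟩ := IsPGroup.iff_card.1 (isPGroup_of_forall_mem_pow_eq_one hNr)
  have hNp : (Nat.card N).Coprime p := hNcard ▸ ((Nat.coprime_primes hr hp).2 hrp).pow_left b
  have hNq : (Nat.card N).Coprime q := hNcard ▸ ((Nat.coprime_primes hr hq).2 hrq).pow_left b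
  have hcard : Nat.card G = Nat.card (G ⧸ N) * Nat.card N :=
    card_eq_card_quotient_mul_card_subgroup N
  have hlt : Nat.card (G ⧸ N) < n := hn ▸ hcard ▸
    lt_mul_of_one_lt_right Nat.card_pos ((one_lt_card_iff_ne_bot N).2 hN)
  obtain ⟨Kb, hKb⟩ := ih _ hlt (hNp.symm.dvd_of_dvd_mul_right (hcard ▸ hpd))
    (hNq.symm.dvd_of_dvd_mul_right (hcard ▸ hqd)) rfl
  obtain ⟨C, ⟨e⟩⟩ := exists_subgroup_mulEquiv_of_coprime_card Kb (hKb.coprime_card hNp hNq)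
  exact ⟨C, hKb.of_mulEquiv e.symm⟩

theorem IsPGroup.isCyclic_of_forall_sylow_isCyclic {q : ℕ} [Fact q.Prime]
    (hcyc : ∀ Q : Sylow q G, IsCyclic Q) {S : Subgroup G} (hS : IsPGroup q S) : IsCyclic S := by
  obtain ⟨Q, hQ⟩ := hS.exists_le_sylow
  have := hcyc Q
  exact isCyclic_of_le hQ

theorem prime_pow_dvd_exponent_of_forall_sylow_isCyclic [Finite G] {q a : ℕ} [Fact q.Prime]
    (hcyc : ∀ Q : Sylow q G, IsCyclic Q) (K : Subgroup G) (ha : q ^ a ∣ Nat.card K) :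
    q ^ a ∣ Monoid.exponent K := by
  obtain ⟨S, hS⟩ := Sylow.exists_subgroup_card_pow_prime q ha
  let e := equivMapOfInjective S K.subtype K.subtype_injective
  have : IsCyclic (S.map K.subtype) :=
    ((IsPGroup.of_card hS).map K.subtype).isCyclic_of_forall_sylow_isCyclic hcyc
  have : IsCyclic S := isCyclic_of_surjective e.symm.toMonoidHom e.symm.surjective
  calc q ^ a = Monoid.exponent S := by rw [IsCyclic.exponent_eq_card, hS]
    _ ∣ Monoid.exponent K := Monoid.exponent_dvd_of_monoidHom S.subtype S.subtype_injective

theorem Nat.eq_one_of_pow_dvd_mul_self {p q a : ℕ} (hq : q.Prime) (hpq : p.Coprime q)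
    (ha : 0 < a) (h : q ^ a ∣ p * q) : a = 1 := by
  obtain ⟨b, rfl⟩ := Nat.exists_eq_add_of_lt ha
  rw [zero_add, pow_succ] at h
  have hb : q ^ b = 1 :=
    Nat.Coprime.eq_one_of_dvd (hpq.pow_right b).symm (Nat.dvd_of_mul_dvd_mul_right hq.pos h)
  rw [Nat.pow_eq_one, or_iff_right hq.ne_one] at hb
  omega

theorem card_eq_mul_of_exponent_eq_mul [Finite G] {p q a : ℕ} (hq : q.Prime)
    (hpq : p.Coprime q) (hcyc : ∀ Q : Sylow q G, IsCyclic Q) {K : Subgroup G}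
    (hexp : Monoid.exponent K = p * q) (ha : 0 < a) (hcard : Nat.card K = p * q ^ a) :
    Nat.card K = p * q := by
  have := Fact.mk hq
  have hdvd : q ^ a ∣ p * q :=
    hexp ▸ prime_pow_dvd_exponent_of_forall_sylow_isCyclic hcyc K (hcard ▸ dvd_mul_left _ _)
  rw [hcard, Nat.eq_one_of_pow_dvd_mul_self hq hpq ha hdvd, pow_one]

end

/-- Lemma 3.1: A finite solvable group `H` of order divisible by distinct primes `p, q`
contains a subgroup of exponent `pq` and order `pq^a` or `p^a q`; moreover, if the
Sylow `p`- and `q`-subgroups of `H` are both cyclic, then `H` has a subgroup of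
order `pq`. -/
theorem stmt_7 {H : Type*} [Group H] [Finite H] [Group.IsSolvable H]
    {p q : ℕ} (hp : p.Prime) (hq : q.Prime) (hpq : p ≠ q)
    (hpd : p ∣ Nat.card H) (hqd : q ∣ Nat.card H) :
    (∃ K : Subgroup H, Monoid.exponent K = p * q ∧
      ∃ a : ℕ, 0 < a ∧ (Nat.card K = p * q ^ a ∨ Nat.card K = p ^ a * q)) ∧
    ((∀ P : Sylow p H, IsCyclic P) → (∀ Q : Sylow q H, IsCyclic Q) →
      ∃ K : Subgroup H, Nat.card K = p * q) := by
  obtain ⟨K, hK⟩ := exists_isBiprimaryOfExponent hp hq hpq hpd hqd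
  refine ⟨⟨K, hK⟩, fun hcycP hcycQ => ⟨K, ?_⟩⟩
  have hcop := (Nat.coprime_primes hp hq).2 hpq
  obtain ⟨hexp, a, ha, hcard | hcard⟩ := hK
  · exact card_eq_mul_of_exponent_eq_mul hq hcop hcycQ hexp ha hcard
  · rw [mul_comm] at hexp hcard ⊢
    exact card_eq_mul_of_exponent_eq_mul hp hcop.symm hcycP hexp ha hcard
end

section
/- For every integer n ≥ 5 with n ≠ 6 and n ≠ 10, there exist at least two primes r with n/2 < r ≤ n; that is, π(n) − π(n/2) ≥ 2, where π denotes the prime counting function. Equivalently, there exist primes p and q with n/2 < p < q ≤ n. -/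
/-!
Erdős' proof of Bertrand's postulate, with one prime allowed in `(m, 2m]`. In the factorisation
of `centralBinom m`, primes `p ≤ √(2m)` contribute at most `2m` each, primes in `(√(2m), 2m/3]`
at most their product `≤ 4 ^ (2m/3)`, primes in `(2m/3, m]` nothing, and primes in `(m, 2m]` at
most `2m` each. With at most one prime in `(m, 2m]` this contradicts `4 ^ m < m * centralBinom m`
once `m ≥ 2048`; the analytic inequality this needs follows from the one used for Bertrand's
postulate, `x (2x)^√(2x) 4^(2x/3) ≤ 4^x`, applied at `x / 4` and raised to the fourth power.
Smaller `n` are covered by an explicit descending chain of prime pairs.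
-/

open Nat Finset
open scoped Nat.Prime

theorem real_two_primes_inequality {x : ℝ} (hx : 2048 ≤ x) :
    2 * x ^ 2 * (2 * x) ^ √(2 * x) * 4 ^ (2 * x / 3) ≤ 4 ^ x := by
  obtain ⟨y, rfl⟩ : ∃ y, x = 4 * y := ⟨x / 4, by ring⟩
  have hy : 512 ≤ y := by linarith
  have hsqrt : √(2 * (4 * y)) = 2 * √(2 * y) := by
    rw [show 2 * (4 * y) = 2 ^ 2 * (2 * y) by ring, Real.sqrt_mul (by norm_num),
      Real.sqrt_sq (by norm_num)]
  have pow_four : ∀ a : ℝ, 0 ≤ a → ∀ b : ℝ, (a ^ b) ^ 4 = a ^ (4 * b) := fun a ha b => by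
    rw [← Real.rpow_natCast, ← Real.rpow_mul ha]
    norm_num [mul_comm]
  calc 2 * (4 * y) ^ 2 * (2 * (4 * y)) ^ √(2 * (4 * y)) * 4 ^ (2 * (4 * y) / 3)
      ≤ y ^ 4 * ((2 * y) ^ 2) ^ (2 * √(2 * y)) * 4 ^ (4 * (2 * y / 3)) := by
        rw [hsqrt, show 2 * (4 * y) / 3 = 4 * (2 * y / 3) by ring]
        gcongr
        · nlinarith [pow_le_pow_left₀ (by norm_num) hy 2]
        · nlinarith
    _ = (y * (2 * y) ^ √(2 * y) * 4 ^ (2 * y / 3)) ^ 4 := by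
        rw [mul_pow (y * _), mul_pow y, pow_four _ (by positivity), pow_four _ (by norm_num),
          ← Real.rpow_natCast _ 2, ← Real.rpow_mul (by positivity)]
        ring_nf
    _ ≤ (4 ^ y) ^ 4 := by
        gcongr
        exact Bertrand.real_main_inequality hy
    _ = 4 ^ (4 * y) := pow_four _ (by norm_num) _

theorem two_primes_main_inequality {n : ℕ} (hn : 2048 ≤ n) :
    2 * n ^ 2 * (2 * n) ^ sqrt (2 * n) * 4 ^ (2 * n / 3) ≤ 4 ^ n := by
  rw [← @cast_le ℝ]
  simp only [cast_mul, cast_pow, ← Real.rpow_natCast, cast_ofNat]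
  refine le_trans ?_ (real_two_primes_inequality (by exact_mod_cast hn))
  gcongr
  · norm_cast
  · exact_mod_cast (by omega : 1 ≤ 2 * n)
  · exact_mod_cast Real.nat_sqrt_le_real_sqrt
  · norm_num
  · exact cast_div_le.trans (by push_cast; rfl)

theorem prod_pow_factorization_centralBinom_range_le {n : ℕ} (hn : 0 < n) :
    ∏ p ∈ range (2 * n / 3 + 1), p ^ (centralBinom n).factorization p
      ≤ (2 * n) ^ sqrt (2 * n) * 4 ^ (2 * n / 3) := by
  set P := {p ∈ range (2 * n / 3 + 1) | p.Prime}
  rw [← prod_filter_of_ne (p := Nat.Prime) fun p _ h => by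
      contrapose! h; rw [factorization_eq_zero_of_not_prime _ h, pow_zero],
    ← prod_filter_mul_prod_filter_not P (· ≤ sqrt (2 * n))]
  gcongr ?_ * ?_
  · calc _ ≤ (2 * n) ^ #{p ∈ P | p ≤ sqrt (2 * n)} :=
          prod_le_pow_card _ _ _ fun p _ => pow_factorization_choose_le (by omega)
      _ ≤ (2 * n) ^ #(Ioc 0 (sqrt (2 * n))) := by
          gcongr
          · omega
          · intro p hp
            simp only [P, mem_filter, mem_Ioc] at hp ⊢
            exact ⟨hp.1.2.pos, hp.2⟩
      _ = (2 * n) ^ sqrt (2 * n) := by rw [card_Ioc, Nat.sub_zero]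
  · calc _ ≤ ∏ p ∈ P with ¬p ≤ sqrt (2 * n), p := by
          refine prod_le_prod' fun p hp => ?_
          simp only [P, mem_filter] at hp
          refine (pow_le_pow_right₀ hp.1.2.one_lt.le ?_).trans (pow_one p).le
          exact factorization_choose_le_one (sqrt_lt'.mp (not_le.mp hp.2))
      _ ≤ ∏ p ∈ P, p :=
          prod_le_prod_of_subset_of_one_le' (filter_subset _ _) fun p hp _ =>
            (mem_filter.mp hp).2.one_lt.le
      _ ≤ 4 ^ (2 * n / 3) := primorial_le_four_pow _

theorem prod_pow_factorization_centralBinom_Ico_le {n : ℕ} (hn : 2 < n) :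
    ∏ p ∈ Ico (2 * n / 3 + 1) (2 * n + 1), p ^ (centralBinom n).factorization p
      ≤ (2 * n) ^ #{p ∈ Ioc n (2 * n) | p.Prime} := by
  rw [← prod_subset (s₁ := {p ∈ Ioc n (2 * n) | p.Prime}) ?sub ?one]
  · exact prod_le_pow_card _ _ _ fun p _ => pow_factorization_choose_le (by omega)
  case sub =>
    intro p hp
    simp only [mem_filter, mem_Ioc, mem_Ico] at hp ⊢
    omega
  case one =>
    intro p hp hpS
    simp only [mem_filter, mem_Ioc, mem_Ico, not_and] at hp hpS
    by_cases hprime : p.Prime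
    · have hpn : p ≤ n := by
        by_contra! hnp
        exact hpS ⟨hnp, by omega⟩ hprime
      rw [factorization_centralBinom_of_two_mul_self_lt_three_mul hn hpn (by omega), pow_zero]
    · rw [factorization_eq_zero_of_not_prime _ hprime, pow_zero]

theorem centralBinom_le_mul_pow_card_primes {n : ℕ} (hn : 2 < n) :
    centralBinom n ≤
      (2 * n) ^ sqrt (2 * n) * 4 ^ (2 * n / 3) * (2 * n) ^ #{p ∈ Ioc n (2 * n) | p.Prime} := by
  rw [← prod_pow_factorization_centralBinom,
    ← prod_range_mul_prod_Ico _ (by omega : 2 * n / 3 + 1 ≤ 2 * n + 1)]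
  exact mul_le_mul' (prod_pow_factorization_centralBinom_range_le (by omega))
    (prod_pow_factorization_centralBinom_Ico_le hn)

theorem exists_two_primes_lt_and_le_two_mul_eventually {n : ℕ} (hn : 2048 ≤ n) :
    ∃ p q, p.Prime ∧ q.Prime ∧ n < p ∧ p < q ∧ q ≤ 2 * n := by
  by_contra! h
  have hcard : #{p ∈ Ioc n (2 * n) | p.Prime} ≤ 1 := by
    refine card_le_one.2 fun p hp q hq => ?_
    simp only [mem_filter, mem_Ioc] at hp hq
    by_contra hpq
    rcases Nat.lt_or_gt_of_ne hpq with hlt | hlt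
    · exact (h p q hp.2 hq.2 hp.1.1 hlt).not_ge hq.1.2
    · exact (h q p hq.2 hp.2 hq.1.1 hlt).not_ge hp.1.2
  have hbinom : centralBinom n ≤ (2 * n) ^ sqrt (2 * n) * 4 ^ (2 * n / 3) * (2 * n) :=
    (centralBinom_le_mul_pow_card_primes (by omega)).trans <|
      (Nat.mul_le_mul_left _ (pow_le_pow_right₀ (by omega) hcard)).trans_eq (by rw [pow_one])
  refine (four_pow_lt_mul_centralBinom n (by omega)).not_ge ?_
  calc n * centralBinom n ≤ n * ((2 * n) ^ sqrt (2 * n) * 4 ^ (2 * n / 3) * (2 * n)) := by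
        gcongr
    _ = 2 * n ^ 2 * (2 * n) ^ sqrt (2 * n) * 4 ^ (2 * n / 3) := by ring
    _ ≤ 4 ^ n := two_primes_main_inequality hn

theorem exists_two_primes_half_lt_of_lt_two_mul {n : ℕ} (p q : ℕ)
    (hpq : p.Prime ∧ q.Prime ∧ p < q) (hn : n < 2 * p)
    (H : n < q → ∃ p q, p.Prime ∧ q.Prime ∧ n / 2 < p ∧ p < q ∧ q ≤ n) :
    ∃ p q, p.Prime ∧ q.Prime ∧ n / 2 < p ∧ p < q ∧ q ≤ n := by
  rcases lt_or_ge n q with h | h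
  · exact H h
  · exact ⟨p, q, hpq.1, hpq.2.1, by omega, hpq.2.2, h⟩

theorem exists_two_primes_half_lt_of_lt_4096 {n : ℕ} (hn : 5 ≤ n) (h6 : n ≠ 6) (h10 : n ≠ 10)
    (h4096 : n < 4096) : ∃ p q, p.Prime ∧ q.Prime ∧ n / 2 < p ∧ p < q ∧ q ≤ n := by
  -- The pair `(p, q)` settles `q ≤ n < 2 * p`; only `n = 6` and `n = 10` fall through the gaps.
  refine exists_two_primes_half_lt_of_lt_two_mul 2053 2063 (by norm_num) (by omega) fun _ => ?_
  refine exists_two_primes_half_lt_of_lt_two_mul 1033 1039 (by norm_num) (by omega) fun _ => ?_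
  refine exists_two_primes_half_lt_of_lt_two_mul 521 523 (by norm_num) (by omega) fun _ => ?_
  refine exists_two_primes_half_lt_of_lt_two_mul 263 269 (by norm_num) (by omega) fun _ => ?_
  refine exists_two_primes_half_lt_of_lt_two_mul 137 139 (by norm_num) (by omega) fun _ => ?_
  refine exists_two_primes_half_lt_of_lt_two_mul 71 73 (by norm_num) (by omega) fun _ => ?_
  refine exists_two_primes_half_lt_of_lt_two_mul 37 41 (by norm_num) (by omega) fun _ => ?_
  refine exists_two_primes_half_lt_of_lt_two_mul 23 29 (by norm_num) (by omega) fun _ => ?_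
  refine exists_two_primes_half_lt_of_lt_two_mul 17 19 (by norm_num) (by omega) fun _ => ?_
  refine exists_two_primes_half_lt_of_lt_two_mul 11 13 (by norm_num) (by omega) fun _ => ?_
  refine exists_two_primes_half_lt_of_lt_two_mul 7 11 (by norm_num) (by omega) fun _ => ?_
  refine exists_two_primes_half_lt_of_lt_two_mul 5 7 (by norm_num) (by omega) fun _ => ?_
  exact exists_two_primes_half_lt_of_lt_two_mul 3 5 (by norm_num) (by omega) fun _ => by omega

theorem primeCounting_lt_of_lt_prime {m p : ℕ} (hp : p.Prime) (hmp : m < p) : π m < π p :=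
  calc π m = π' (m + 1) := rfl
    _ ≤ π' p := monotone_primeCounting' hmp
    _ < π' (p + 1) := count_lt_count_succ_iff.mpr hp

/-- For every `n ≥ 5` with `n ≠ 6, 10` there are at least two primes `r` with
`n/2 < r ≤ n`, i.e. `π(n) - π(n/2) ≥ 2`; equivalently there are primes `p < q` with
`n/2 < p` and `q ≤ n`. -/
theorem stmt_10 (n : ℕ) (hn : 5 ≤ n) (h6 : n ≠ 6) (h10 : n ≠ 10) :
    2 ≤ Nat.primeCounting n - Nat.primeCounting (n / 2) ∧
    ∃ p q : ℕ, p.Prime ∧ q.Prime ∧ (n : ℚ) / 2 < (p : ℚ) ∧ p < q ∧ q ≤ n := by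
  obtain ⟨p, q, hp, hq, hnp, hpq, hqn⟩ :
      ∃ p q, p.Prime ∧ q.Prime ∧ n / 2 < p ∧ p < q ∧ q ≤ n := by
    rcases lt_or_ge n 4096 with h | h
    · exact exists_two_primes_half_lt_of_lt_4096 hn h6 h10 h
    · obtain ⟨p, q, hp, hq, hnp, hpq, hqn⟩ :=
        exists_two_primes_lt_and_le_two_mul_eventually (n := n / 2) (by omega)
      exact ⟨p, q, hp, hq, hnp, hpq, by omega⟩
  refine ⟨?_, p, q, hp, hq, ?_, hpq, hqn⟩
  · have := primeCounting_lt_of_lt_prime hp hnp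
    have := primeCounting_lt_of_lt_prime hq hpq
    have := monotone_primeCounting hqn
    omega
  · rw [div_lt_iff₀ two_pos]
    exact_mod_cast (by omega : n < p * 2)
end

section
/- Let n > 5 be an integer that is not prime. Then for all primes a and b with a < n and b < n, there exist elements x, y of the alternating group A_n such that the order of x is a, the order of y is b, and the subgroup ⟨x, y⟩ generated by x and y is a proper subgroup of A_n. -/
/-!
Elements of any prime order `q < n` can be found in `Aₙ` fixing a prescribed point: a `q`-cycle
for odd `q`, and a product of two disjoint transpositions for `q = 2` (which is where `n ≥ 5`
enters). Two such elements fixing the same point generate a subgroup of its stabilizer, which is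
a proper subgroup of `Aₙ`.
-/

open Equiv Equiv.Perm MulAction

section

variable {α : Type*} [Fintype α] [DecidableEq α]

namespace Equiv.Perm

theorem exists_cycleType_eq_and_apply_eq (p : α) {m : Multiset ℕ}
    (hsum : m.sum < Fintype.card α) (htwo : ∀ k ∈ m, 2 ≤ k) :
    ∃ g : Perm α, g.cycleType = m ∧ g p = p := by
  have hcard : m.sum ≤ Fintype.card {x // x ≠ p} := by
    rw [Fintype.card_subtype_compl, Fintype.card_subtype_eq]; omega
  obtain ⟨g, hg⟩ := (exists_with_cycleType_iff {x // x ≠ p}).mpr ⟨hcard, htwo⟩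
  exact ⟨ofSubtype g, cycleType_ofSubtype.trans hg, ofSubtype_apply_of_not_mem g fun h => h rfl⟩

theorem exists_mem_alternatingGroup_orderOf_eq_and_apply_eq (p : α) {q : ℕ} (hq : q.Prime)
    (hqα : q < Fintype.card α) (hα : 5 ≤ Fintype.card α) :
    ∃ g ∈ alternatingGroup α, orderOf g = q ∧ g p = p := by
  rcases hq.eq_two_or_odd' with rfl | hodd
  · obtain ⟨g, hg, hgp⟩ := exists_cycleType_eq_and_apply_eq p (m := {2, 2})
      (by simp only [Multiset.insert_eq_cons, Multiset.sum_cons, Multiset.sum_singleton]; omega)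
      (by simp)
    refine ⟨g, ?_, ?_, hgp⟩
    · rw [mem_alternatingGroup, sign_of_cycleType, hg]; decide
    · rw [← lcm_cycleType, hg]; decide
  · obtain ⟨g, hg, hgp⟩ := exists_cycleType_eq_and_apply_eq p (m := {q}) (by simpa using hqα)
      (by simpa using hq.two_le)
    refine ⟨g, ?_, ?_, hgp⟩
    · rw [mem_alternatingGroup, sign_of_cycleType, hg]; simp [hodd.add_one.neg_one_pow]
    · rw [← lcm_cycleType, hg]; simp

end Equiv.Perm

theorem alternatingGroup.closure_ne_top_of_forall_apply_eq
    (h3 : 3 ≤ Fintype.card α) {s : Set (alternatingGroup α)} (p : α)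
    (hs : ∀ g ∈ s, (g : Perm α) p = p) :
    Subgroup.closure s ≠ ⊤ := by
  have hstab : Subgroup.closure s ≤ stabilizer (alternatingGroup α) p :=
    (Subgroup.closure_le _).mpr hs
  exact ne_top_of_le_ne_top ((isCoatom_stabilizer_singleton (by simpa using h3)
    (Set.singleton_nonempty p) Set.subsingleton_singleton).1) (by rwa [stabilizer_singleton])

end

theorem stmt_11_general (n : ℕ) (hn : 5 < n) :
    ∀ a b : ℕ, a.Prime → b.Prime → a < n → b < n →
      ∃ x y : alternatingGroup (Fin n), orderOf x = a ∧ orderOf y = b ∧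
        Subgroup.closure {x, y} ≠ (⊤ : Subgroup (alternatingGroup (Fin n))) := by
  intro a b ha hb han hbn
  have hcard : Fintype.card (Fin n) = n := Fintype.card_fin n
  let p : Fin n := ⟨0, by omega⟩
  obtain ⟨x, hxA, hxa, hxp⟩ := exists_mem_alternatingGroup_orderOf_eq_and_apply_eq p ha
    (by omega) (by omega)
  obtain ⟨y, hyA, hyb, hyp⟩ := exists_mem_alternatingGroup_orderOf_eq_and_apply_eq p hb
    (by omega) (by omega)
  refine ⟨⟨x, hxA⟩, ⟨y, hyA⟩, Subgroup.orderOf_mk x hxA ▸ hxa,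
    Subgroup.orderOf_mk y hyA ▸ hyb,
    alternatingGroup.closure_ne_top_of_forall_apply_eq (by omega) p ?_⟩
  rintro g (rfl | rfl) <;> assumption

/-- If `n > 5` is not prime, then for all primes `a, b < n` there exist `x, y ∈ Aₙ`
with `|x| = a`, `|y| = b` and `⟨x, y⟩` a proper subgroup of `Aₙ`. -/
theorem stmt_11 (n : ℕ) (hn : 5 < n) (hnp : ¬ n.Prime) :
    ∀ a b : ℕ, a.Prime → b.Prime → a < n → b < n →
      ∃ x y : alternatingGroup (Fin n), orderOf x = a ∧ orderOf y = b ∧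
        Subgroup.closure {x, y} ≠ (⊤ : Subgroup (alternatingGroup (Fin n))) :=
  stmt_11_general n hn
end

section
/- Let q = 2^a with a ≥ 2, let F be the finite field with q elements, and let G = SL(2, F) be the special linear group of 2 × 2 matrices of determinant 1 over F. Let r₁ be an odd prime dividing q − 1 and let r₂ be an odd prime dividing q + 1. Then for all x, y ∈ G with the order of x equal to r₁ and the order of y equal to r₂, the subgroup ⟨x, y⟩ is not solvable. -/
/-!
Suppose `⟨x, y⟩` were solvable, and pass to the algebraic closure `K` of `F`. A nontrivial
solvable subgroup of `SL₂(K)` has a nontrivial abelian normal subgroup `N`. In characteristic 2,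
either every element of `N` has trace `0`, hence is unipotent, and `N` fixes a unique line, which
the whole group then preserves; or `N` contains an element `s` with two distinct eigenvalues, and
the group permutes the two eigenlines of `s`, so that squares, hence elements of odd order,
preserve each of them. Either way `x` and `y` have a common eigenvector `v`.

The eigenvalue `α` of `x` on `v` has order `r₁ ∣ q - 1`, so the `q`-power Frobenius fixes `α` and
the entries of `x`, hence maps the `α`-eigenline of `x`, which is the line through `v`, to itself.
So it also fixes the eigenvalue `β` of `y` on `v`, and `r₂ = orderOf β` divides `q - 1`. As `r₂`
also divides `q + 1`, it divides `2`, which is absurd.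
-/

open Matrix
open scoped MatrixGroups

theorem pow_smul_eq_pow_smul {G K V : Type*} [Monoid G] [Monoid K] [MulAction G V]
    [MulAction K V] [SMulCommClass G K V] {g : G} {c : K} {v : V} (h : g • v = c • v) (n : ℕ) :
    g ^ n • v = c ^ n • v := by
  induction n with
  | zero => simp
  | succ n ih => rw [pow_succ, mul_smul, h, smul_comm, ih, smul_smul, ← pow_succ']

theorem sq_smul_mem_span_singleton_of_permutes_lines {G K V : Type*} [Group G] [Field K]
    [AddCommGroup V] [Module K V] [DistribMulAction G V] [SMulCommClass G K V] {g : G}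
    {v w : V} (hv : v ≠ 0) (hw : w ∉ K ∙ v) (hgv : g • v ∈ K ∙ v ∨ g • v ∈ K ∙ w)
    (hgw : g • w ∈ K ∙ v ∨ g • w ∈ K ∙ w) : g ^ 2 • v ∈ K ∙ v := by
  simp only [Submodule.mem_span_singleton] at hgv hgw ⊢
  rw [pow_two, mul_smul]
  rcases hgv with ⟨a, ha⟩ | ⟨a, ha⟩
  · exact ⟨a * a, by rw [← ha, smul_comm, ← ha, smul_smul]⟩
  rcases hgw with ⟨b, hb⟩ | ⟨b, hb⟩
  · exact ⟨a * b, by rw [← ha, smul_comm, ← hb, smul_smul]⟩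
  -- `g` would send both `v` and `w` into the line through `w`
  have ha0 : a ≠ 0 := by
    rintro rfl
    exact hv ((smul_eq_zero_iff_eq g).1 (by rw [← ha, zero_smul]))
  have hba : b • v = a • w := by
    refine sub_eq_zero.1 ((smul_eq_zero_iff_eq g).1 ?_)
    rw [smul_sub, smul_comm, ← ha, smul_comm g a, ← hb, smul_smul, smul_smul, mul_comm, sub_self]
  refine absurd (Submodule.mem_span_singleton.2 ⟨a⁻¹ * b, ?_⟩) hw
  rw [← smul_smul, hba, smul_smul, inv_mul_cancel₀ ha0, one_smul]

theorem Group.IsSolvable.exists_normal_ne_bot_commutator_eq_bot {G : Type*} [Group G]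
    [Group.IsSolvable G] [Nontrivial G] :
    ∃ N : Subgroup G, N.Normal ∧ N ≠ ⊥ ∧ ⁅N, N⁆ = ⊥ := by
  classical
  have h := Group.IsSolvable.solvable (G := G)
  obtain ⟨n, hn⟩ := Nat.exists_eq_add_one_of_ne_zero fun h0 : Nat.find h = 0 =>
    (top_ne_bot : (⊤ : Subgroup G) ≠ ⊥) (by simpa [h0] using Nat.find_spec h)
  refine ⟨derivedSeries G n, derivedSeries_normal G n, Nat.find_min h (by omega), ?_⟩
  rw [← derivedSeries_succ, ← hn, Nat.find_spec h]

namespace Matrix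

theorem exists_mulVec_eq_smul_of_isAlgClosed {K n : Type*} [Field K] [IsAlgClosed K] [Fintype n]
    [DecidableEq n] [Nonempty n] (M : Matrix n n K) : ∃ c : K, ∃ v ≠ 0, M *ᵥ v = c • v := by
  obtain ⟨c, hc⟩ := Module.End.exists_eigenvalue (toLin' M)
  obtain ⟨v, hv⟩ := hc.exists_hasEigenvector
  exact ⟨c, v, hv.2, by simpa using hv.apply_eq_smul⟩

theorem ringHom_apply_eq_self_of_common_eigenvector {K n : Type*} [Field K] [Fintype n]
    (σ : K →+* K) {A B : Matrix n n K} (hA : A.map σ = A) (hB : B.map σ = B) {v : n → K}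
    (hv : v ≠ 0) {α β : K} (hAv : A *ᵥ v = α • v) (hBv : B *ᵥ v = β • v) (hα : σ α = α)
    (hline : ∀ w, A *ᵥ w = α • w → w ∈ K ∙ v) : σ β = β := by
  have hσ : ∀ M : Matrix n n K, M.map σ = M → ∀ u : n → K, M *ᵥ (σ ∘ u) = σ ∘ (M *ᵥ u) :=
    fun M hM u => funext fun i => by rw [Function.comp_apply, RingHom.map_mulVec, hM]
  have hσv : σ ∘ v ≠ 0 := fun h => hv (funext fun i => σ.injective (by simpa using congrFun h i))
  obtain ⟨c, hc⟩ := Submodule.mem_span_singleton.1 <| hline (σ ∘ v) <| by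
    rw [hσ A hA, hAv]; funext i; simp [hα]
  refine smul_left_injective K hσv ?_
  calc σ β • (σ ∘ v) = B *ᵥ (σ ∘ v) := by rw [hσ B hB, hBv]; funext i; simp
    _ = β • (σ ∘ v) := by rw [← hc, mulVec_smul, hBv, smul_comm]

theorem det_sub_smul_one_fin_two {R : Type*} [CommRing R] (M : Matrix (Fin 2) (Fin 2) R) (c : R) :
    (M - c • 1).det = c ^ 2 - M.trace * c + M.det := by
  simp only [det_fin_two, trace_fin_two, Matrix.sub_apply, Matrix.smul_apply, smul_eq_mul,
    one_apply_eq, one_apply_ne Fin.zero_ne_one, one_apply_ne Fin.zero_ne_one.symm]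
  ring

theorem sq_sub_trace_smul_add_det_smul_fin_two {R : Type*} [CommRing R] [Nontrivial R]
    (M : Matrix (Fin 2) (Fin 2) R) : M ^ 2 - M.trace • M + M.det • 1 = 0 := by
  simpa [charpoly_fin_two, Algebra.smul_def] using aeval_self_charpoly M

section Field

variable {K : Type*} [Field K]

theorem exists_mulVec_eq_smul_iff_fin_two (M : Matrix (Fin 2) (Fin 2) K) (c : K) :
    (∃ v ≠ 0, M *ᵥ v = c • v) ↔ c ^ 2 - M.trace * c + M.det = 0 := by
  simp only [← det_sub_smul_one_fin_two, ← exists_mulVec_eq_zero_iff, sub_mulVec, smul_mulVec,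
    one_mulVec, sub_eq_zero]

theorem mem_span_singleton_of_mulVec_eq_zero {M : Matrix (Fin 2) (Fin 2) K} (hM : M ≠ 0)
    {v w : Fin 2 → K} (hv : v ≠ 0) (hMv : M *ᵥ v = 0) (hMw : M *ᵥ w = 0) : w ∈ K ∙ v := by
  by_contra hw
  have hli : LinearIndependent K ![v, w] :=
    (LinearIndependent.pair_iff' hv).2 fun a h => hw (Submodule.mem_span_singleton.2 ⟨a, h⟩)
  let b := basisOfLinearIndependentOfCardEqFinrank hli (by simp)
  refine hM (toLin'.injective (b.ext fun i => ?_))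
  fin_cases i <;> simp [b, hMv, hMw]

theorem mem_span_singleton_of_mulVec_eq_smul {M : Matrix (Fin 2) (Fin 2) K} {c : K}
    (hM : M - c • 1 ≠ 0) {v w : Fin 2 → K} (hv : v ≠ 0) (hMv : M *ᵥ v = c • v)
    (hMw : M *ᵥ w = c • w) : w ∈ K ∙ v :=
  mem_span_singleton_of_mulVec_eq_zero hM hv
    (by rw [sub_mulVec, smul_mulVec, one_mulVec, hMv, sub_self])
    (by rw [sub_mulVec, smul_mulVec, one_mulVec, hMw, sub_self])

theorem mulVec_mem_span_singleton_of_commute {A B : Matrix (Fin 2) (Fin 2) K} {c : K}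
    (hAB : Commute A B) (hA : A - c • 1 ≠ 0) {v : Fin 2 → K} (hv : v ≠ 0)
    (hAv : A *ᵥ v = c • v) : B *ᵥ v ∈ K ∙ v :=
  mem_span_singleton_of_mulVec_eq_smul hA hv hAv (by
    rw [mulVec_mulVec, hAB.eq, ← mulVec_mulVec, hAv, mulVec_smul])

end Field

end Matrix

namespace Matrix.SpecialLinearGroup

section CharTwo

variable {K : Type*} [Field K] [CharP K 2]

theorem sub_smul_one_ne_zero {g : SL(2, K)} (hg : g ≠ 1) (c : K) :
    (g : Matrix (Fin 2) (Fin 2) K) - c • 1 ≠ 0 := by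
  intro h
  have hgc : (g : Matrix (Fin 2) (Fin 2) K) = c • 1 := sub_eq_zero.1 h
  have hc : c ^ 2 = 1 ^ 2 := by simpa [hgc] using g.det_coe
  exact hg (Subtype.ext (by rw [hgc, CharTwo.sq_injective hc, one_smul, coe_one]))

theorem ne_one_of_trace_ne_zero {s : SL(2, K)} (htr : (s : Matrix (Fin 2) (Fin 2) K).trace ≠ 0) :
    s ≠ 1 := by
  rintro rfl
  exact htr (by simp [trace_one, CharTwo.two_eq_zero])

theorem exists_smul_eq_self_iff_trace_eq_zero (g : SL(2, K)) :
    (∃ v : Fin 2 → K, v ≠ 0 ∧ g • v = v) ↔ (g : Matrix (Fin 2) (Fin 2) K).trace = 0 := by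
  have h := exists_mulVec_eq_smul_iff_fin_two (g : Matrix (Fin 2) (Fin 2) K) 1
  simp only [one_smul, det_coe, one_pow, mul_one] at h
  rwa [sub_add_eq_add_sub, CharTwo.add_self_eq_zero, zero_sub, neg_eq_zero] at h

theorem eq_one_of_trace_eq_zero_of_smul_eq {g : SL(2, K)}
    (htr : (g : Matrix (Fin 2) (Fin 2) K).trace = 0) {v : Fin 2 → K} (hv : v ≠ 0) {c : K}
    (hgv : g • v = c • v) : c = 1 := by
  have h := (exists_mulVec_eq_smul_iff_fin_two (g : Matrix (Fin 2) (Fin 2) K) c).1 ⟨v, hv, hgv⟩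
  rw [htr, det_coe, zero_mul, sub_zero, ← CharTwo.sub_eq_add, sub_eq_zero, ← one_pow 2] at h
  exact CharTwo.sq_injective h

theorem sq_eq_one_of_trace_eq_zero {g : SL(2, K)}
    (htr : (g : Matrix (Fin 2) (Fin 2) K).trace = 0) : g ^ 2 = 1 := by
  have h := sq_sub_trace_smul_add_det_smul_fin_two (g : Matrix (Fin 2) (Fin 2) K)
  rw [htr, det_coe, zero_smul, sub_zero, one_smul, ← CharTwo.sub_eq_add, sub_eq_zero] at h
  exact Subtype.ext (by rw [coe_pow, h, coe_one])

theorem orderOf_eq_of_smul_eq_smul {g : SL(2, K)} (hg : Odd (orderOf g)) {v : Fin 2 → K}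
    (hv : v ≠ 0) {c : K} (hgv : g • v = c • v) : orderOf c = orderOf g := by
  refine orderOf_eq_orderOf_iff.2 fun n => ⟨fun hc => ?_, fun hgn => ?_⟩
  · have hfix : g ^ n • v = v := by rw [pow_smul_eq_pow_smul hgv, hc, one_smul]
    have hsq : g ^ (n * 2) = 1 := by
      rw [pow_mul]
      exact sq_eq_one_of_trace_eq_zero ((exists_smul_eq_self_iff_trace_eq_zero _).1 ⟨v, hv, hfix⟩)
    exact orderOf_dvd_iff_pow_eq_one.1
      (hg.coprime_two_right.dvd_of_dvd_mul_right (orderOf_dvd_of_pow_eq_one hsq))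
  · refine smul_left_injective K hv ?_
    simp only [← pow_smul_eq_pow_smul hgv, hgn, one_smul]

theorem smul_mem_span_singleton_of_commute {s t : SL(2, K)} (hst : Commute s t) (hs : s ≠ 1)
    {v : Fin 2 → K} (hv : v ≠ 0) (hsv : s • v ∈ K ∙ v) : t • v ∈ K ∙ v := by
  obtain ⟨c, hc⟩ := Submodule.mem_span_singleton.1 hsv
  have hst' : Commute (s : Matrix (Fin 2) (Fin 2) K) t := by
    simpa only [Commute, SemiconjBy, coe_mul] using congrArg Subtype.val hst.eq
  exact mulVec_mem_span_singleton_of_commute hst' (sub_smul_one_ne_zero hs c) hv hc.symm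

theorem exists_eigenlines_of_trace_ne_zero [IsAlgClosed K] {s : SL(2, K)}
    (htr : (s : Matrix (Fin 2) (Fin 2) K).trace ≠ 0) :
    ∃ v w : Fin 2 → K, v ≠ 0 ∧ w ∉ K ∙ v ∧ s • v ∈ K ∙ v ∧ s • w ∈ K ∙ w ∧
      ∀ u : Fin 2 → K, s • u ∈ K ∙ u → u ∈ K ∙ v ∨ u ∈ K ∙ w := by
  set τ := (s : Matrix (Fin 2) (Fin 2) K).trace
  obtain ⟨μ, v, hv, hsv⟩ := exists_mulVec_eq_smul_of_isAlgClosed (s : Matrix (Fin 2) (Fin 2) K)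
  have hμ := (exists_mulVec_eq_smul_iff_fin_two _ μ).1 ⟨v, hv, hsv⟩
  rw [det_coe] at hμ
  obtain ⟨w, hw, hsw⟩ := (exists_mulVec_eq_smul_iff_fin_two _ (τ - μ)).2 (by
    rw [det_coe]; linear_combination hμ)
  have hs1 := ne_one_of_trace_ne_zero htr
  refine ⟨v, w, hv, fun hwv => ?_, Submodule.mem_span_singleton.2 ⟨μ, hsv.symm⟩,
    Submodule.mem_span_singleton.2 ⟨τ - μ, hsw.symm⟩, fun u hsu => ?_⟩
  · -- the two eigenvalues `μ` and `τ - μ` differ, since otherwise `τ = 2 * μ = 0`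
    obtain ⟨a, rfl⟩ := Submodule.mem_span_singleton.1 hwv
    have : (τ - μ) • a • v = μ • a • v := by
      rw [← hsw, mulVec_smul, hsv, smul_comm]
    have hμ' : τ - μ = μ := smul_left_injective K hw this
    exact htr (by rw [sub_eq_iff_eq_add.1 hμ', CharTwo.add_self_eq_zero])
  · by_cases hu : u = 0
    · exact Or.inl (hu ▸ Submodule.zero_mem _)
    obtain ⟨e, he⟩ := Submodule.mem_span_singleton.1 hsu
    have he' := (exists_mulVec_eq_smul_iff_fin_two _ e).1 ⟨u, hu, he.symm⟩
    rw [det_coe] at he'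
    rcases mul_eq_zero.1 (show (e - μ) * (e - (τ - μ)) = 0 by linear_combination he' - hμ)
      with h | h
    · rw [sub_eq_zero.1 h] at he
      exact Or.inl
        (mem_span_singleton_of_mulVec_eq_smul (sub_smul_one_ne_zero hs1 _) hv hsv he.symm)
    · rw [sub_eq_zero.1 h] at he
      exact Or.inr
        (mem_span_singleton_of_mulVec_eq_smul (sub_smul_one_ne_zero hs1 _) hw hsw he.symm)

theorem exists_forall_mem_normalizer_smul_mem_span_of_trace_eq_zero {N : Subgroup SL(2, K)}
    (hN : N ≠ ⊥) (hNc : N ≤ Subgroup.centralizer N)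
    (htr : ∀ n ∈ N, (n : Matrix (Fin 2) (Fin 2) K).trace = 0) :
    ∃ v : Fin 2 → K, v ≠ 0 ∧ ∀ g ∈ Subgroup.normalizer (N : Set SL(2, K)), g • v ∈ K ∙ v := by
  obtain ⟨u, huN, hu⟩ := N.bot_or_exists_ne_one.resolve_left hN
  obtain ⟨v, hv, huv⟩ := (exists_smul_eq_self_iff_trace_eq_zero u).2 (htr u huN)
  have hline : ∀ w : Fin 2 → K, u • w = w → w ∈ K ∙ v := fun w huw =>
    mem_span_singleton_of_mulVec_eq_smul (sub_smul_one_ne_zero hu 1) hv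
      (by rw [one_smul]; exact huv) (by rw [one_smul]; exact huw)
  -- `N` preserves the line through `v`, and `1` is the only eigenvalue of its elements
  have hfix : ∀ n ∈ N, n • v = v := by
    intro n hn
    obtain ⟨c, hc⟩ := Submodule.mem_span_singleton.1 <|
      smul_mem_span_singleton_of_commute (Subgroup.mem_centralizer_iff.1 (hNc hn) u huN) hu hv
        (by rw [huv]; exact Submodule.mem_span_singleton_self v)
    rw [← hc, eq_one_of_trace_eq_zero_of_smul_eq (htr n hn) hv hc.symm, one_smul]
  refine ⟨v, hv, fun g hg => hline _ ?_⟩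
  rw [show u • g • v = g • (g⁻¹ * u * g) • v by simp [mul_smul],
    hfix _ ((Subgroup.mem_normalizer_iff''.1 hg u).1 huN)]

theorem exists_forall_mem_normalizer_odd_smul_mem_span_of_trace_ne_zero [IsAlgClosed K]
    {N : Subgroup SL(2, K)} (hNc : N ≤ Subgroup.centralizer N) {s : SL(2, K)} (hs : s ∈ N)
    (htr : (s : Matrix (Fin 2) (Fin 2) K).trace ≠ 0) :
    ∃ v : Fin 2 → K, v ≠ 0 ∧ ∀ g ∈ Subgroup.normalizer (N : Set SL(2, K)),
      Odd (orderOf g) → g • v ∈ K ∙ v := by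
  obtain ⟨v, w, hv, hwv, hsv, hsw, hlines⟩ := exists_eigenlines_of_trace_ne_zero htr
  have hw : w ≠ 0 := fun h => hwv (h ▸ Submodule.zero_mem _)
  have hperm : ∀ h ∈ Subgroup.normalizer (N : Set SL(2, K)), ∀ u : Fin 2 → K, u ≠ 0 →
      s • u ∈ K ∙ u → h • u ∈ K ∙ v ∨ h • u ∈ K ∙ w := by
    intro h hh u hu hsu
    refine hlines _ ?_
    have hconj := (Subgroup.mem_normalizer_iff''.1 hh s).1 hs
    obtain ⟨e, he⟩ := Submodule.mem_span_singleton.1 <| smul_mem_span_singleton_of_commute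
      (Subgroup.mem_centralizer_iff.1 (hNc hconj) s hs) (ne_one_of_trace_ne_zero htr) hu hsu
    refine Submodule.mem_span_singleton.2 ⟨e, ?_⟩
    rw [show s • h • u = h • (h⁻¹ * s * h) • u by simp [mul_smul], ← he, smul_comm h e u]
  refine ⟨v, hv, fun g hg hodd => ?_⟩
  obtain ⟨m, hm⟩ := hodd
  have hsq : (g ^ (m + 1)) ^ 2 = g := by
    rw [← pow_mul, show (m + 1) * 2 = orderOf g + 1 by omega, pow_succ, pow_orderOf_eq_one,
      one_mul]
  have hgm := pow_mem hg (m + 1)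
  rw [← hsq]
  exact sq_smul_mem_span_singleton_of_permutes_lines hv hwv (hperm _ hgm v hv hsv)
    (hperm _ hgm w hw hsw)

theorem exists_forall_odd_smul_mem_span_of_isSolvable [IsAlgClosed K] (H : Subgroup SL(2, K))
    [Group.IsSolvable H] :
    ∃ v : Fin 2 → K, v ≠ 0 ∧ ∀ g ∈ H, Odd (orderOf g) → g • v ∈ K ∙ v := by
  rcases subsingleton_or_nontrivial H with hH | hH
  · refine ⟨Pi.single 0 1, by simp, fun g hg _ => ?_⟩
    rw [show g = 1 from congrArg Subtype.val (Subsingleton.elim (⟨g, hg⟩ : H) 1), one_smul]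
    exact Submodule.mem_span_singleton_self _
  obtain ⟨N, hNn, hN, hNN⟩ := Group.IsSolvable.exists_normal_ne_bot_commutator_eq_bot (G := H)
  set N' := N.map H.subtype
  have hN' : N' ≠ ⊥ := by rwa [Ne, Subgroup.map_eq_bot_iff_of_injective _ H.subtype_injective]
  have hN'c : N' ≤ Subgroup.centralizer N' := Subgroup.commutator_eq_bot_iff_le_centralizer.1
    (by rw [← Subgroup.map_commutator, hNN, Subgroup.map_bot])
  have hHN : H ≤ Subgroup.normalizer (N' : Set SL(2, K)) := fun g hg =>
    Subgroup.le_normalizer_map H.subtype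
      ⟨⟨g, hg⟩, by rw [Subgroup.normalizer_eq_top_iff.2 hNn]; trivial, rfl⟩
  by_cases htr : ∀ n ∈ N', (n : Matrix (Fin 2) (Fin 2) K).trace = 0
  · obtain ⟨v, hv, hvN⟩ :=
      exists_forall_mem_normalizer_smul_mem_span_of_trace_eq_zero hN' hN'c htr
    exact ⟨v, hv, fun g hg _ => hvN g (hHN hg)⟩
  · push Not at htr
    obtain ⟨s, hs, hstr⟩ := htr
    obtain ⟨v, hv, hvN⟩ :=
      exists_forall_mem_normalizer_odd_smul_mem_span_of_trace_ne_zero hN'c hs hstr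
    exact ⟨v, hv, fun g hg => hvN g (hHN hg)⟩

end CharTwo

theorem orderOf_dvd_card_sub_one_of_isSolvable {F : Type*} [Field F] [Fintype F] [CharP F 2]
    {x y : SL(2, F)} (hx1 : x ≠ 1) (hx : Odd (orderOf x)) (hy : Odd (orderOf y))
    (hxq : orderOf x ∣ Fintype.card F - 1) (h : Group.IsSolvable (Subgroup.closure {x, y})) :
    orderOf y ∣ Fintype.card F - 1 := by
  let K := AlgebraicClosure F
  let φ : SL(2, F) →* SL(2, K) := map (algebraMap F K)
  have hφ : Function.Injective φ := fun g g' hgg' =>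
    Subtype.ext (Matrix.map_injective (algebraMap F K).injective (congrArg Subtype.val hgg'))
  have : Group.IsSolvable ((Subgroup.closure {x, y}).map φ) :=
    Group.isSolvable_of_surjective (φ.subgroupMap_surjective _)
  obtain ⟨v, hv, hvH⟩ :=
    exists_forall_odd_smul_mem_span_of_isSolvable ((Subgroup.closure {x, y}).map φ)
  have heig : ∀ g ∈ ({x, y} : Set SL(2, F)), Odd (orderOf g) →
      ∃ c : K, φ g • v = c • v ∧ orderOf c = orderOf g := by
    intro g hg hodd
    rw [← orderOf_injective φ hφ g] at hodd ⊢
    obtain ⟨c, hc⟩ := Submodule.mem_span_singleton.1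
      (hvH _ (Subgroup.mem_map_of_mem φ (Subgroup.subset_closure hg)) hodd)
    exact ⟨c, hc.symm, orderOf_eq_of_smul_eq_smul hodd hv hc.symm⟩
  obtain ⟨α, hα, hαo⟩ := heig x (by simp) hx
  obtain ⟨β, hβ, hβo⟩ := heig y (by simp) hy
  let σ : K →+* K := FiniteField.frobeniusAlgEquivOfAlgebraic F K
  have hσ : ∀ c : K, σ c = c ^ Fintype.card F := fun c => by simp [σ]
  have hσφ : ∀ g : SL(2, F), (φ g : Matrix (Fin 2) (Fin 2) K).map σ = φ g := fun g => by
    ext i j; simp [φ, σ]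
  have hq : Fintype.card F ≠ 0 := Fintype.card_ne_zero
  have hσα : σ α = α := by
    rw [hσ, ← pow_sub_one_mul hq, orderOf_dvd_iff_pow_eq_one.1 (hαo ▸ hxq), one_mul]
  have hσβ : σ β = β := ringHom_apply_eq_self_of_common_eigenvector σ (hσφ x) (hσφ y) hv hα hβ
    hσα fun w hw => mem_span_singleton_of_mulVec_eq_smul
      (sub_smul_one_ne_zero ((map_ne_one_iff φ hφ).2 hx1) α) hv hα hw
  have hβ0 : β ≠ 0 := by
    rintro rfl
    exact hv ((smul_eq_zero_iff_eq (φ y)).1 (by rw [hβ, zero_smul]))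
  rw [← hβo]
  refine orderOf_dvd_of_pow_eq_one (mul_right_cancel₀ hβ0 ?_)
  rw [pow_sub_one_mul hq, ← hσ, hσβ, one_mul]

end Matrix.SpecialLinearGroup

theorem stmt_12_general (a : ℕ) (F : Type*) [Field F] [Fintype F]
    (hF : Fintype.card F = 2 ^ a)
    (r₁ r₂ : ℕ) (hr₁ : r₁.Prime) (hr₂ : r₂.Prime) (h₁ : Odd r₁) (h₂ : Odd r₂)
    (hd₁ : r₁ ∣ 2 ^ a - 1) (hd₂ : r₂ ∣ 2 ^ a + 1) :
    ∀ x y : Matrix.SpecialLinearGroup (Fin 2) F,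
      orderOf x = r₁ → orderOf y = r₂ →
        ¬ IsSolvable (Subgroup.closure {x, y}) := by
  intro x y hx hy hsolv
  have : Fact (Nat.Prime 2) := ⟨Nat.prime_two⟩
  have : CharP F 2 := charP_of_card_eq_prime_pow hF
  have hx1 : x ≠ 1 := fun h => hr₁.ne_one (by rw [← hx, h, orderOf_one])
  have hyq : r₂ ∣ 2 ^ a - 1 := by
    rw [← hy, ← hF]
    exact SpecialLinearGroup.orderOf_dvd_card_sub_one_of_isSolvable hx1 (hx ▸ h₁) (hy ▸ h₂)
      (by rwa [hx, hF]) hsolv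
  have h2 : r₂ ∣ 2 := by
    have := Nat.dvd_sub hd₂ hyq
    rwa [show 2 ^ a + 1 - (2 ^ a - 1) = 2 by have := Nat.one_le_two_pow (n := a); omega] at this
  obtain rfl := (Nat.prime_dvd_prime_iff_eq hr₂ Nat.prime_two).1 h2
  exact Nat.not_odd_iff_even.2 even_two h₂

/-- For `G = SL₂(q)` with `q = 2^a ≥ 4`: if `r₁` is an odd prime dividing `q - 1` and
`r₂` an odd prime dividing `q + 1`, then for all `x, y ∈ G` with `|x| = r₁` and
`|y| = r₂`, the subgroup `⟨x, y⟩` is not solvable. -/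
theorem stmt_12 (a : ℕ) (ha : 2 ≤ a) (F : Type*) [Field F] [Fintype F]
    (hF : Fintype.card F = 2 ^ a)
    (r₁ r₂ : ℕ) (hr₁ : r₁.Prime) (hr₂ : r₂.Prime) (h₁ : Odd r₁) (h₂ : Odd r₂)
    (hd₁ : r₁ ∣ 2 ^ a - 1) (hd₂ : r₂ ∣ 2 ^ a + 1) :
    ∀ x y : Matrix.SpecialLinearGroup (Fin 2) F,
      orderOf x = r₁ → orderOf y = r₂ →
        ¬ IsSolvable (Subgroup.closure {x, y}) :=
  stmt_12_general a F hF r₁ r₂ hr₁ hr₂ h₁ h₂ hd₁ hd₂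
end

section
/- Let q ≥ 7 be a Mersenne prime, i.e., q is prime and q = 2^a − 1 for some integer a. Let G = SL(2, F_q) be the special linear group of 2 × 2 matrices of determinant 1 over the field F_q with q elements. Then for all x, y ∈ G with the order of x equal to q and the order of y equal to 4, the subgroup ⟨x, y⟩ equals G. -/
/-!
An element `x` of order `q` satisfies `(x - 1) ^ q = x ^ q - 1 = 0` in characteristic `q`, so it
fixes a nonzero vector; conjugating that vector to `e₀` turns `x` into an upper transvection
`[[1, μ], [0, 1]]` with `μ ≠ 0`. In odd characteristic `-1` is the only involution of `SL₂`, so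
`y ^ 2 = -1`; as `q ≡ 3 mod 4`, `-1` is not a square, hence no conjugate of `y` is upper
triangular. The Bruhat decomposition of the conjugate of `y` then puts a nontrivial lower
transvection into the subgroup. Over a prime field a single nontrivial transvection generates its
whole root group, and the upper and lower root groups generate `SL₂`.
-/

open Matrix Matrix.SpecialLinearGroup
open scoped MatrixGroups

theorem Matrix.exists_mulVec_eq_self_of_pow_eq_one {n K : Type*} [Fintype n] [DecidableEq n]
    [Nonempty n] [Field K] (p : ℕ) [Fact p.Prime] [CharP K p] {M : Matrix n n K}
    (hM : M ^ p = 1) : ∃ v ≠ 0, M *ᵥ v = v := by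
  have hnil : (M - 1) ^ p = 0 := by
    rw [sub_pow_char_of_commute p (Commute.one_right M), hM, one_pow, sub_self]
  have hdet : (M - 1).det = 0 := by
    refine pow_eq_zero_iff (Fact.out : p.Prime).ne_zero |>.mp ?_
    rw [← det_pow, hnil, det_zero]
  obtain ⟨v, hv, hMv⟩ := exists_mulVec_eq_zero_iff.mpr hdet
  exact ⟨v, hv, by rwa [sub_mulVec, one_mulVec, sub_eq_zero] at hMv⟩

namespace Matrix.SpecialLinearGroup

variable {F : Type*} [Field F]

theorem det_fin_two_eq_one (A : SL(2, F)) : A 0 0 * A 1 1 - A 0 1 * A 1 0 = 1 := by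
  rw [← det_fin_two, det_coe]

theorem exists_smul_eq_single_zero {v : Fin 2 → F} (hv : v ≠ 0) :
    ∃ g : SL(2, F), g • v = Pi.single 0 1 := by
  have hcop : IsCoprime (v 0) (v 1) := by
    rw [Semifield.isCoprime_iff]
    by_contra! h
    exact hv (funext fun i => by fin_cases i <;> simp [h.1, h.2])
  obtain ⟨g, hg0, hg1⟩ := hcop.exists_SL2_col 0
  refine ⟨g⁻¹, ?_⟩
  have hge : g • (Pi.single 0 1 : Fin 2 → F) = v := by
    ext i; fin_cases i <;> simp [SpecialLinearGroup.smul_def, hg0, hg1]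
  rw [← hge, inv_smul_smul]

theorem eq_transvection_of_smul_single_zero {A : SL(2, F)}
    (hA : A • (Pi.single 0 1 : Fin 2 → F) = Pi.single 0 1) :
    A = transvection zero_ne_one (A 0 1) := by
  have h00 : A 0 0 = 1 := by simpa [SpecialLinearGroup.smul_def] using congrFun hA 0
  have h10 : A 1 0 = 0 := by simpa [SpecialLinearGroup.smul_def] using congrFun hA 1
  have h11 : A 1 1 = 1 := by simpa [h00, h10] using A.det_fin_two_eq_one
  ext i j; fin_cases i <;> fin_cases j <;> simp [transvection_coe, h00, h10, h11]

theorem eq_transvection_mul_transvection_mul_transvection {A : SL(2, F)} (hA : A 1 0 ≠ 0) :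
    A = transvection zero_ne_one ((A 0 0 - 1) / A 1 0) * transvection one_ne_zero (A 1 0) *
      transvection zero_ne_one ((A 1 1 - 1) / A 1 0) := by
  have hb : A 0 1 = (A 0 0 * A 1 1 - 1) / A 1 0 := by
    rw [eq_div_iff hA]; linear_combination -A.det_fin_two_eq_one
  ext i j
  fin_cases i <;> fin_cases j <;>
    simp [transvection_coe, Matrix.mul_apply, Fin.sum_univ_two, hb] <;> field_simp <;> ring

theorem eq_one_or_eq_neg_one_of_sq_eq_one (h2 : (2 : F) ≠ 0) {z : SL(2, F)} (hz : z ^ 2 = 1) :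
    z = 1 ∨ z = -1 := by
  have hinv : z⁻¹ = z := inv_eq_of_mul_eq_one_left (by rwa [← sq])
  rw [SL2_inv_expl] at hinv
  have e (i j : Fin 2) := congrArg (fun A : SL(2, F) => A i j) hinv
  have hd : z 1 1 = z 0 0 := by simpa using e 0 0
  have eq_zero_of_neg_eq (a : F) (ha : -a = a) : a = 0 :=
    (mul_eq_zero.mp (by linear_combination -ha : (2 : F) * a = 0)).resolve_left h2
  have hb : z 0 1 = 0 := eq_zero_of_neg_eq _ (by simpa using e 0 1)
  have hc : z 1 0 = 0 := eq_zero_of_neg_eq _ (by simpa using e 1 0)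
  have ha : z 0 0 * z 0 0 = 1 := by simpa [hb, hd] using z.det_fin_two_eq_one
  rcases mul_self_eq_one_iff.mp ha with ha₁ | ha₁
  · left; ext i j; fin_cases i <;> fin_cases j <;> simp [ha₁, hb, hc, hd]
  · right; ext i j; fin_cases i <;> fin_cases j <;> simp [ha₁, hb, hc, hd]

theorem sq_eq_neg_one_of_orderOf_eq_four (h2 : (2 : F) ≠ 0) {y : SL(2, F)} (hy : orderOf y = 4) :
    y ^ 2 = -1 := by
  have hy4 : (y ^ 2) ^ 2 = 1 := by
    rw [← pow_mul, show 2 * 2 = orderOf y by rw [hy], pow_orderOf_eq_one]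
  refine (eq_one_or_eq_neg_one_of_sq_eq_one h2 hy4).resolve_left fun h => ?_
  have := orderOf_dvd_of_pow_eq_one h
  rw [hy] at this
  norm_num at this

theorem apply_one_zero_ne_zero_of_sq_eq_neg_one (h : ¬IsSquare (-1 : F)) {z : SL(2, F)}
    (hz : z ^ 2 = -1) : z 1 0 ≠ 0 := by
  intro hc
  refine h ⟨z 0 0, ?_⟩
  simpa [sq, Matrix.mul_apply, Fin.sum_univ_two, hc] using
    (congrArg (fun A : SL(2, F) => A 0 0) hz).symm

theorem transvection_pow {ι R : Type*} [Fintype ι] [DecidableEq ι] [CommRing R] {i j : ι}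
    (hij : i ≠ j) (b : R) (n : ℕ) : transvection hij b ^ n = transvection hij (n * b) := by
  induction n with
  | zero => simp
  | succ n ih => rw [pow_succ, ih, ← transvection_add]; push_cast; ring_nf

theorem eq_top_of_forall_transvection_mem {H : Subgroup SL(2, F)}
    (h01 : ∀ t, transvection zero_ne_one t ∈ H) (h10 : ∀ t, transvection one_ne_zero t ∈ H) :
    H = ⊤ := by
  refine eq_top_iff.mpr fun A _ =>
    SL2.transvection_induction (· ∈ H) (fun i j hij t => ?_) (fun _ _ => H.mul_mem) A
  fin_cases i <;> fin_cases j
  exacts [absurd rfl hij, h01 t, h10 t, absurd rfl hij]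

section ZMod

variable {p : ℕ} [Fact p.Prime]

theorem transvection_mem_of_transvection_mem {ι : Type*} [Fintype ι] [DecidableEq ι]
    {H : Subgroup (SpecialLinearGroup ι (ZMod p))} {i j : ι} (hij : i ≠ j) {μ : ZMod p}
    (hμ : μ ≠ 0) (hH : transvection hij μ ∈ H) (t : ZMod p) : transvection hij t ∈ H := by
  have ht : t = ((t / μ).val : ZMod p) * μ := by rw [ZMod.natCast_zmod_val, div_mul_cancel₀ _ hμ]
  rw [ht, ← transvection_pow]
  exact H.pow_mem hH _

theorem closure_transvection_pair_eq_top {μ : ZMod p} (hμ : μ ≠ 0) {A : SL(2, ZMod p)}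
    (hA : A 1 0 ≠ 0) : Subgroup.closure {transvection zero_ne_one μ, A} = ⊤ := by
  set H := Subgroup.closure {transvection zero_ne_one μ, A}
  have upper : ∀ t, transvection zero_ne_one t ∈ H :=
    transvection_mem_of_transvection_mem zero_ne_one hμ (Subgroup.subset_closure (by simp))
  have lower : transvection one_ne_zero (A 1 0) ∈ H := by
    have hAH : A ∈ H := Subgroup.subset_closure (by simp)
    rw [eq_transvection_mul_transvection_mul_transvection hA,
      H.mul_mem_cancel_right (upper _), H.mul_mem_cancel_left (upper _)] at hAH
    exact hAH
  exact eq_top_of_forall_transvection_mem upper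
    (transvection_mem_of_transvection_mem one_ne_zero hA lower)

end ZMod

end Matrix.SpecialLinearGroup

theorem Subgroup.closure_pair_eq_top_of_conj {G : Type*} [Group G] (g x y : G)
    (h : closure {g * x * g⁻¹, g * y * g⁻¹} = ⊤) : closure {x, y} = ⊤ := by
  have := congrArg (map (MulAut.conj g⁻¹).toMonoidHom) h
  rw [MonoidHom.map_closure, map_top_of_surjective _ (MulEquiv.surjective _), Set.image_pair]
    at this
  simpa [mul_assoc] using this

theorem Nat.mod_four_eq_three_of_eq_two_pow_sub_one {q a : ℕ} (hq : q = 2 ^ a - 1) (h3 : 3 ≤ q) :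
    q % 4 = 3 := by
  have ha : 2 ≤ a := by
    by_contra! h
    interval_cases a <;> omega
  obtain ⟨k, rfl⟩ : ∃ k, a = k + 2 := ⟨a - 2, by omega⟩
  rw [pow_add] at hq
  omega

/-- For `G = SL₂(q)` with `q ≥ 7` a Mersenne prime: for all `x, y ∈ G` with `|x| = q`
and `|y| = 4`, we have `⟨x, y⟩ = G`. -/
theorem stmt_13 (q : ℕ) (hq : q.Prime) (h7 : 7 ≤ q) (hM : ∃ a : ℕ, q = 2 ^ a - 1) :
    ∀ x y : Matrix.SpecialLinearGroup (Fin 2) (ZMod q),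
      orderOf x = q → orderOf y = 4 →
        Subgroup.closure {x, y} = ⊤ := by
  have := Fact.mk hq
  intro x y hx hy
  have hq4 : q % 4 = 3 := Nat.mod_four_eq_three_of_eq_two_pow_sub_one hM.choose_spec (by omega)
  have hsq : ¬IsSquare (-1 : ZMod q) := fun h => ZMod.exists_sq_eq_neg_one_iff.mp h hq4
  have h2 : (2 : ZMod q) ≠ 0 := Ring.two_ne_zero (by rw [ZMod.ringChar_zmod_n]; omega)
  have hxq : x ^ q = 1 := by simpa [hx] using pow_orderOf_eq_one x
  obtain ⟨v, hv, hxv⟩ := exists_mulVec_eq_self_of_pow_eq_one q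
    (M := (x : Matrix (Fin 2) (Fin 2) (ZMod q))) (by rw [← coe_pow, hxq, coe_one])
  obtain ⟨g, hg⟩ := exists_smul_eq_single_zero hv
  refine Subgroup.closure_pair_eq_top_of_conj g x y ?_
  have hconj := eq_transvection_of_smul_single_zero (A := g * x * g⁻¹) (by
    rw [← hg, mul_smul, mul_smul, inv_smul_smul, Matrix.SpecialLinearGroup.smul_def x,
      smul_eq_mulVec, hxv])
  rw [hconj]
  refine closure_transvection_pair_eq_top (fun h0 => ?_)
    (apply_one_zero_ne_zero_of_sq_eq_neg_one hsq ?_)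
  · rw [h0, transvection_coeff_zero, conj_eq_one_iff] at hconj
    rw [hconj, orderOf_one] at hx
    exact hq.one_lt.ne hx
  · rw [conj_pow, sq_eq_neg_one_of_orderOf_eq_four h2 hy, mul_neg_one, neg_mul, mul_inv_cancel]
end
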